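/- arXiv:0708.2871 — 13 statements merged into one kernel-verified Lean document; each statement's English description precedes it below -/
import Mathlib

section
/- For any triangle with side lengths a, b, c and area S, a² + b² + c² ≥ 4√3·S + (a−b)² + (b−c)² + (c−a)² (Finsler–Hadwiger inequality). -/
theorem finsler_hadwiger (a b c : ℝ) (ha : 0 < a) (hb : 0 < b) (hc : 0 < c)
    (hA : a < b + c) (hB : b < c + a) (hC : c < a + b) (s S : ℝ) (hs : s = (a + b + c) / 2)
    (hS : S = Real.sqrt (s * (s - a) * (s - b) * (s - c))) :
    a ^ 2 + b ^ 2 + c ^ 2 ≥ 4 * Real.sqrt 3 * S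
      + (a - b) ^ 2 + (b - c) ^ 2 + (c - a) ^ 2 := by
  have hx : 0 < s - a := by rw [hs]; linarith
  have hy : 0 < s - b := by rw [hs]; linarith
  have hz : 0 < s - c := by rw [hs]; linarith
  have hsp : 0 < s := by rw [hs]; linarith
  set P : ℝ := s * (s - a) * (s - b) * (s - c) with hPdef
  have hP : 0 ≤ P := by positivity
  set R : ℝ := 2 * (a * b + b * c + c * a) - (a ^ 2 + b ^ 2 + c ^ 2) with hRdef
  have hR : 0 ≤ R := by nlinarith [mul_pos hx hy, mul_pos hy hz]
  have h3P : 3 * P ≤ (R / 4) ^ 2 := by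
    have hRe : R = 4 * ((s-a)*(s-b) + (s-b)*(s-c) + (s-c)*(s-a)) := by
      rw [hRdef, hs]; ring
    have hPe : P = ((s-a) + (s-b) + (s-c)) * (s-a) * (s-b) * (s-c) := by
      rw [hPdef, hs]; ring
    rw [hRe, hPe]
    nlinarith [sq_nonneg ((s-a)*(s-b) - (s-b)*(s-c)), sq_nonneg ((s-b)*(s-c) - (s-c)*(s-a)),
      sq_nonneg ((s-c)*(s-a) - (s-a)*(s-b))]
  have key : Real.sqrt 3 * S ≤ R / 4 := by
    rw [hS, ← Real.sqrt_mul (by norm_num : (0:ℝ) ≤ 3)]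
    calc Real.sqrt (3 * P) ≤ Real.sqrt ((R / 4) ^ 2) := Real.sqrt_le_sqrt h3P
      _ = R / 4 := Real.sqrt_sq (by linarith)
  nlinarith [key]
end

section
/- For any triangle with side lengths a, b, c, the chain of inequalities a² + b² + c² ≥ ab + bc + ca ≥ a√(bc) + b√(ca) + c√(ab) ≥ 3·(a²b²c²)^(1/3) ≥ 4√3·S holds, where S is the area of the triangle. -/
/-- Abstract core: Newton-type inequalities imply the quartic bound. -/
lemma keypqr (p q r : ℝ) (hp0 : 0 < p) (hq0 : 0 < q) (hr0 : 0 ≤ r)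
    (h1 : 9 * r ≤ p * q) (h2 : 3 * (p * r) ≤ q ^ 2) (h3 : 3 * q ≤ p ^ 2) :
    (p * r) ^ 3 ≤ 27 / 4096 * (p * q - r) ^ 4 := by
  have h2c : (3 * (p * r)) ^ 3 ≤ (q ^ 2) ^ 3 := pow_le_pow_left₀ (by positivity) h2 3
  have hPge : (8 / 9) * (p * q) ≤ p * q - r := by linarith
  have hP4 : ((8 / 9) * (p * q)) ^ 4 ≤ (p * q - r) ^ 4 := pow_le_pow_left₀ (by positivity) hPge 4
  have h3s : (3 * q) ^ 2 ≤ (p ^ 2) ^ 2 := pow_le_pow_left₀ (by positivity) h3 2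
  have hq4 : (0:ℝ) ≤ q ^ 4 := by positivity
  have A : (p * r) ^ 3 ≤ q ^ 6 / 27 := by nlinarith [h2c]
  have B : q ^ 6 ≤ p ^ 4 * q ^ 4 / 9 := by nlinarith [mul_le_mul_of_nonneg_right h3s hq4]
  have C : (p * q) ^ 4 / 243 ≤ 27 / 4096 * (p * q - r) ^ 4 := by nlinarith [hP4]
  have D : p ^ 4 * q ^ 4 = (p * q) ^ 4 := by ring
  linarith

/-- Key polynomial inequality: for positive x, y, z,
    ((x+y+z)·xyz)³ ≤ (27/4096)·((x+y)(y+z)(z+x))⁴. -/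
lemma key4 (x y z : ℝ) (hx : 0 < x) (hy : 0 < y) (hz : 0 < z) :
    ((x + y + z) * (x * y * z)) ^ 3 ≤ 27 / 4096 * ((x + y) * (y + z) * (z + x)) ^ 4 := by
  have h1 : 9 * (x * y * z) ≤ (x + y + z) * (x * y + y * z + z * x) := by
    nlinarith [mul_nonneg hx.le (sq_nonneg (y - z)), mul_nonneg hy.le (sq_nonneg (z - x)),
      mul_nonneg hz.le (sq_nonneg (x - y))]
  have h2 : 3 * ((x + y + z) * (x * y * z)) ≤ (x * y + y * z + z * x) ^ 2 := by
    nlinarith [sq_nonneg (x * y - y * z), sq_nonneg (y * z - z * x), sq_nonneg (z * x - x * y)]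
  have h3 : 3 * (x * y + y * z + z * x) ≤ (x + y + z) ^ 2 := by
    nlinarith [sq_nonneg (x - y), sq_nonneg (y - z), sq_nonneg (z - x)]
  have key := keypqr (x + y + z) (x * y + y * z + z * x) (x * y * z)
    (by positivity) (by positivity) (by positivity) h1 h2 h3
  calc ((x + y + z) * (x * y * z)) ^ 3
      ≤ 27 / 4096 * ((x + y + z) * (x * y + y * z + z * x) - x * y * z) ^ 4 := key
    _ = 27 / 4096 * ((x + y) * (y + z) * (z + x)) ^ 4 := by ring

/-- From (16S²)³ ≤ 27(u³)² with u > 0, S ≥ 0, deduce 4√3·S ≤ 3u. -/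
lemma conclude (u S : ℝ) (hu0 : 0 < u) (hS : 0 ≤ S)
    (h : (16 * S ^ 2) ^ 3 ≤ 27 * (u ^ (3:ℕ)) ^ 2) : 4 * Real.sqrt 3 * S ≤ 3 * u := by
  have hcube : (16 * S ^ 2) ^ 3 ≤ (3 * u ^ 2) ^ 3 := by nlinarith [h]
  have h162 : 16 * S ^ 2 ≤ 3 * u ^ 2 := by
    by_contra hcon
    push_neg at hcon
    have := pow_lt_pow_left₀ hcon (by positivity : (0:ℝ) ≤ 3 * u ^ 2) (by norm_num : 3 ≠ 0)
    linarith
  have h3s : Real.sqrt 3 ^ 2 = 3 := Real.sq_sqrt (by norm_num)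
  nlinarith [h162, h3s, hS, hu0, mul_nonneg (Real.sqrt_nonneg 3) hS,
    sq_nonneg (3 * u - 4 * Real.sqrt 3 * S)]

theorem weitzenbock_chain (a b c : ℝ) (ha : 0 < a) (hb : 0 < b) (hc : 0 < c)
    (hA : a < b + c) (hB : b < c + a) (hC : c < a + b) (s S : ℝ) (hs : s = (a + b + c) / 2)
    (hS : S = Real.sqrt (s * (s - a) * (s - b) * (s - c))) :
    a ^ 2 + b ^ 2 + c ^ 2 ≥ a * b + b * c + c * a ∧
    a * b + b * c + c * a ≥
      a * Real.sqrt (b * c) + b * Real.sqrt (c * a) + c * Real.sqrt (a * b) ∧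
    a * Real.sqrt (b * c) + b * Real.sqrt (c * a) + c * Real.sqrt (a * b) ≥
      3 * (a ^ 2 * b ^ 2 * c ^ 2) ^ ((1 : ℝ) / 3) ∧
    3 * (a ^ 2 * b ^ 2 * c ^ 2) ^ ((1 : ℝ) / 3) ≥ 4 * Real.sqrt 3 * S := by
  -- AM-GM for square roots
  have sqrt_le : ∀ u v : ℝ, 0 < u → 0 < v → Real.sqrt (u * v) ≤ (u + v) / 2 := by
    intro u v hu hv
    rw [show (u + v) / 2 = Real.sqrt (((u + v) / 2) ^ 2) from (Real.sqrt_sq (by positivity)).symm]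
    exact Real.sqrt_le_sqrt (by nlinarith [sq_nonneg (u - v)])
  have h1 := sqrt_le b c hb hc
  have h2 := sqrt_le c a hc ha
  have h3 := sqrt_le a b ha hb
  have sbc : (0:ℝ) ≤ Real.sqrt (b * c) := Real.sqrt_nonneg _
  have sca : (0:ℝ) ≤ Real.sqrt (c * a) := Real.sqrt_nonneg _
  have sab : (0:ℝ) ≤ Real.sqrt (a * b) := Real.sqrt_nonneg _
  -- product of square roots
  have hsq : Real.sqrt (b * c) * Real.sqrt (c * a) * Real.sqrt (a * b) = a * b * c := by
    rw [← Real.sqrt_mul (by positivity), ← Real.sqrt_mul (by positivity),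
      show b * c * (c * a) * (a * b) = (a * b * c) ^ 2 by ring,
      Real.sqrt_sq (by positivity)]
  -- u := (a²b²c²)^(1/3)
  set u := (a ^ 2 * b ^ 2 * c ^ 2) ^ ((1 : ℝ) / 3) with hu
  have hu0 : 0 < u := Real.rpow_pos_of_pos (by positivity) _
  have huc : u ^ (3 : ℕ) = a ^ 2 * b ^ 2 * c ^ 2 := by
    rw [hu, ← Real.rpow_natCast _ 3, ← Real.rpow_mul (by positivity)]
    norm_num
  refine ⟨by nlinarith [sq_nonneg (a - b), sq_nonneg (b - c), sq_nonneg (c - a)], ?_, ?_, ?_⟩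
  · nlinarith [mul_le_mul_of_nonneg_left h1 ha.le, mul_le_mul_of_nonneg_left h2 hb.le,
      mul_le_mul_of_nonneg_left h3 hc.le]
  · -- AM-GM for three terms
    have key := Real.geom_mean_le_arith_mean3_weighted
      (w₁ := 1/3) (w₂ := 1/3) (w₃ := 1/3)
      (p₁ := a * Real.sqrt (b * c)) (p₂ := b * Real.sqrt (c * a)) (p₃ := c * Real.sqrt (a * b))
      (by norm_num) (by norm_num) (by norm_num)
      (by positivity) (by positivity) (by positivity) (by norm_num)
    rw [← Real.mul_rpow (by positivity) (by positivity),
        ← Real.mul_rpow (by positivity) (by positivity)] at key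
    have hprod : a * Real.sqrt (b * c) * (b * Real.sqrt (c * a)) * (c * Real.sqrt (a * b))
        = a ^ 2 * b ^ 2 * c ^ 2 := by
      have : a * Real.sqrt (b * c) * (b * Real.sqrt (c * a)) * (c * Real.sqrt (a * b))
          = (a * b * c) * (Real.sqrt (b * c) * Real.sqrt (c * a) * Real.sqrt (a * b)) := by ring
      rw [this, hsq]; ring
    rw [hprod] at key
    rw [hu]
    linarith
  · -- Weitzenböck-type: 3u ≥ 4√3 S
    have hsa : 0 < s - a := by rw [hs]; linarith
    have hsb : 0 < s - b := by rw [hs]; linarith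
    have hsc : 0 < s - c := by rw [hs]; linarith
    have hs0 : 0 < s := by rw [hs]; linarith
    have hSnn : 0 ≤ S := by rw [hS]; exact Real.sqrt_nonneg _
    have hS2 : S ^ 2 = s * (s - a) * (s - b) * (s - c) := by
      rw [hS]; exact Real.sq_sqrt (by positivity)
    -- apply key4 with x = -a+b+c, y = a-b+c, z = a+b-c
    have hk := key4 (-a + b + c) (a - b + c) (a + b - c)
      (by linarith) (by linarith) (by linarith)
    have h16 : (16 * S ^ 2) ^ 3 ≤ 27 * (a ^ 2 * b ^ 2 * c ^ 2) ^ 2 := by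
      have e1 : 16 * S ^ 2 = (-a + b + c + (a - b + c) + (a + b - c)) *
          ((-a + b + c) * (a - b + c) * (a + b - c)) := by
        rw [hS2, hs]; ring
      have e2 : 27 / 4096 * ((-a + b + c + (a - b + c)) * (a - b + c + (a + b - c)) *
          (a + b - c + (-a + b + c))) ^ 4 = 27 * (a ^ 2 * b ^ 2 * c ^ 2) ^ 2 := by ring
      rw [e1]
      calc _ ≤ _ := hk
        _ = 27 * (a ^ 2 * b ^ 2 * c ^ 2) ^ 2 := e2
    rw [← huc] at h16
    have := conclude u S hu0 hSnn h16
    linarith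
end

section
/- In any triangle with semiperimeter s and circumradius R, s ≤ (3√3/2)·R (Mitrinović's inequality). -/
private lemma mitrinovic_aux (x y z : ℝ) (hx : 0 < x) (hy : 0 < y) (hz : 0 < z) :
    64 * (x + y + z) ^ 2 * ((x + y + z) * x * y * z) ≤ 27 * ((y + z) * (x + z) * (x + y)) ^ 2 := by
  nlinarith [sq_nonneg (x-y), sq_nonneg (y-z), sq_nonneg (x-z), sq_nonneg (x+y-2*z),
    sq_nonneg (y+z-2*x), sq_nonneg (x+z-2*y), mul_pos hx hy, mul_pos hy hz, mul_pos hx hz,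
    sq_nonneg (x*y-y*z), sq_nonneg (y*z-x*z), sq_nonneg (x*y-x*z), sq_nonneg (x*y+y*z+x*z)]

theorem mitrinovic (a b c : ℝ) (ha : 0 < a) (hb : 0 < b) (hc : 0 < c)
    (hA : a < b + c) (hB : b < c + a) (hC : c < a + b) (s S : ℝ) (hs : s = (a + b + c) / 2)
    (hS : S = Real.sqrt (s * (s - a) * (s - b) * (s - c))) (R : ℝ) (hR : R = a * b * c / (4 * S)) :
    s ≤ 3 * Real.sqrt 3 / 2 * R := by
  have hx : 0 < s - a := by rw [hs]; linarith
  have hy : 0 < s - b := by rw [hs]; linarith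
  have hz : 0 < s - c := by rw [hs]; linarith
  have hsp : 0 < s := by rw [hs]; linarith
  have hprod : 0 < s * (s - a) * (s - b) * (s - c) := by positivity
  have hSpos : 0 < S := by rw [hS]; exact Real.sqrt_pos.mpr hprod
  have hS2 : S ^ 2 = s * (s - a) * (s - b) * (s - c) := by
    rw [hS, Real.sq_sqrt hprod.le]
  have h3 : (0:ℝ) ≤ 3 := by norm_num
  have hsqrt3 : Real.sqrt 3 ^ 2 = 3 := Real.sq_sqrt h3
  have hsqrt3pos : 0 < Real.sqrt 3 := Real.sqrt_pos.mpr (by norm_num)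
  -- reduce to 8 s S ≤ 3 √3 a b c
  have key : 8 * s * S ≤ 3 * Real.sqrt 3 * (a * b * c) := by
    have hsq : (8 * s * S) ^ 2 ≤ (3 * Real.sqrt 3 * (a * b * c)) ^ 2 := by
      have expand : (8 * s * S) ^ 2 = 64 * s ^ 2 * (s * (s - a) * (s - b) * (s - c)) := by
        rw [mul_pow, mul_pow, hS2]; ring
      have expand2 : (3 * Real.sqrt 3 * (a * b * c)) ^ 2 = 27 * (a * b * c) ^ 2 := by
        rw [mul_pow, mul_pow, hsqrt3]; ring
      rw [expand, expand2]
      set x := s - a with hxd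
      set y := s - b with hyd
      set z := s - c with hzd
      have hax : a = y + z := by rw [hyd, hzd, hs]; ring
      have hby : b = x + z := by rw [hxd, hzd, hs]; ring
      have hcz : c = x + y := by rw [hxd, hyd, hs]; ring
      have hsxyz : s = x + y + z := by rw [hxd, hyd, hzd, hs]; ring
      calc 64 * s ^ 2 * (s * x * y * z)
          = 64 * (x + y + z) ^ 2 * ((x + y + z) * x * y * z) := by rw [hsxyz]
        _ ≤ 27 * ((y + z) * (x + z) * (x + y)) ^ 2 := mitrinovic_aux x y z hx hy hz
        _ = 27 * (a * b * c) ^ 2 := by rw [hax, hby, hcz]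
    have h1 : 0 ≤ 8 * s * S := by positivity
    have h2 : 0 ≤ 3 * Real.sqrt 3 * (a * b * c) := by positivity
    exact (pow_le_pow_iff_left₀ h1 h2 (by norm_num)).mp hsq
  have hRrw : 3 * Real.sqrt 3 / 2 * R = 3 * Real.sqrt 3 * (a * b * c) / (8 * S) := by
    rw [hR]; field_simp; ring
  rw [hRrw, le_div_iff₀ (by positivity)]
  calc s * (8 * S) = 8 * s * S := by ring
    _ ≤ 3 * Real.sqrt 3 * (a * b * c) := key
end

section
/- In any triangle with circumradius R, inradius r, and semiperimeter s, 4R + r ≥ s√3. -/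
/-!
With `x = s - a`, `y = s - b`, `z = s - c` (all positive, `x + y + z = s`), Heron's formula reads
`S² = xyz(x + y + z)`, and the identity `abc + xyz = s (xy + yz + zx)` turns `4R + r = abc/S + S/s`
into `s (xy + yz + zx) / S`. The claim is then `xy + yz + zx ≥ √3 S`, i.e.
`(xy + yz + zx)² ≥ 3xyz(x + y + z)`, which is `(p + q + r)² ≥ 3(pq + qr + rp)` for `p = xy`, `q = yz`,
`r = zx`.
-/

open Real

theorem three_mul_mul_mul_add_le_sq (x y z : ℝ) :
    3 * (x * y * z * (x + y + z)) ≤ (x * y + y * z + z * x) ^ 2 := by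
  nlinarith [sq_nonneg (x * y - y * z), sq_nonneg (y * z - z * x), sq_nonneg (z * x - x * y)]

theorem sqrt_three_mul_sqrt_le {x y z : ℝ} (hx : 0 ≤ x) (hy : 0 ≤ y) (hz : 0 ≤ z) :
    √3 * √(x * y * z * (x + y + z)) ≤ x * y + y * z + z * x := by
  rw [← sqrt_mul (by norm_num)]
  exact sqrt_le_iff.mpr ⟨by positivity, three_mul_mul_mul_add_le_sq x y z⟩

theorem four_mul_circumradius_add_inradius_eq {a b c s S : ℝ} (hs : s = (a + b + c) / 2)
    (hs0 : s ≠ 0) (hS0 : S ≠ 0) (hS2 : S ^ 2 = s * (s - a) * (s - b) * (s - c)) :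
    4 * (a * b * c / (4 * S)) + S / s =
      s * ((s - a) * (s - b) + (s - b) * (s - c) + (s - c) * (s - a)) / S := by
  have key : a * b * c + (s - a) * (s - b) * (s - c) =
      s * ((s - a) * (s - b) + (s - b) * (s - c) + (s - c) * (s - a)) := by
    rw [hs]; ring
  field_simp
  linear_combination s * key + hS2

theorem four_R_add_r_general (a b c : ℝ)
    (hA : a < b + c) (hB : b < c + a) (hC : c < a + b) (s S : ℝ) (hs : s = (a + b + c) / 2)
    (hS : S = Real.sqrt (s * (s - a) * (s - b) * (s - c))) (R : ℝ) (hR : R = a * b * c / (4 * S)) (r : ℝ) (hr : r = S / s) :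
    4 * R + r ≥ s * Real.sqrt 3 := by
  have hx : 0 < s - a := by rw [hs]; linarith
  have hy : 0 < s - b := by rw [hs]; linarith
  have hz : 0 < s - c := by rw [hs]; linarith
  have hs0 : 0 < s := by rw [hs]; linarith
  have heron : S = √((s - a) * (s - b) * (s - c) * ((s - a) + (s - b) + (s - c))) := by
    rw [hS]; congr 1; rw [hs]; ring
  have hS0 : 0 < S := hS ▸ sqrt_pos.mpr (by positivity)
  have hS2 : S ^ 2 = s * (s - a) * (s - b) * (s - c) := hS ▸ sq_sqrt (by positivity)
  rw [ge_iff_le, hR, hr, four_mul_circumradius_add_inradius_eq hs hs0.ne' hS0.ne' hS2,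
    le_div_iff₀ hS0, mul_assoc]
  exact mul_le_mul_of_nonneg_left (heron ▸ sqrt_three_mul_sqrt_le hx.le hy.le hz.le) hs0.le

theorem four_R_add_r (a b c : ℝ) (ha : 0 < a) (hb : 0 < b) (hc : 0 < c)
    (hA : a < b + c) (hB : b < c + a) (hC : c < a + b) (s S : ℝ) (hs : s = (a + b + c) / 2)
    (hS : S = Real.sqrt (s * (s - a) * (s - b) * (s - c))) (R : ℝ) (hR : R = a * b * c / (4 * S)) (r : ℝ) (hr : r = S / s) :
    4 * R + r ≥ s * Real.sqrt 3 :=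
  four_R_add_r_general a b c hA hB hC s S hs hS R hR r hr
end

section
/- For positive reals m, n, p, mn/p + np/m + pm/n + 9mnp/(mn + np + pm) ≥ 2(m + n + p). -/
lemma schur_aux (x y z : ℝ) (hx : 0 ≤ x) (hy : 0 ≤ y) (hz : 0 ≤ z) :
    x^2*y + x^2*z + y^2*x + y^2*z + z^2*x + z^2*y ≤ x^3 + y^3 + z^3 + 3*(x*y*z) := by
  rcases le_total x y with hxy | hxy <;> rcases le_total y z with hyz | hyz <;>
    rcases le_total x z with hxz | hxz <;>
  nlinarith [mul_nonneg hx hy, mul_nonneg hy hz, mul_nonneg hx hz,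
    mul_nonneg (mul_nonneg hx hy) hz, sq_nonneg (x-y), sq_nonneg (y-z), sq_nonneg (x-z),
    mul_nonneg (sub_nonneg.2 hxy) (sq_nonneg (x-z)), mul_nonneg (sub_nonneg.2 hyz) (sq_nonneg (x-y)),
    mul_nonneg (sub_nonneg.2 hxz) (sq_nonneg (y-z))]

theorem schur_reciprocal (m n p : ℝ) (hm : 0 < m) (hn : 0 < n) (hp : 0 < p) :
    m * n / p + n * p / m + p * m / n + 9 * m * n * p / (m * n + n * p + p * m)
      ≥ 2 * (m + n + p) := by
  have hS : 0 < m * n + n * p + p * m := by positivity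
  rw [ge_iff_le, ← sub_nonneg]
  have key : m * n / p + n * p / m + p * m / n + 9 * m * n * p / (m * n + n * p + p * m)
      - 2 * (m + n + p) =
      (((m*n)^3 + (n*p)^3 + (p*m)^3 + 3*((m*n)*(n*p)*(p*m)))
        - ((m*n)^2*(n*p) + (m*n)^2*(p*m) + (n*p)^2*(m*n) + (n*p)^2*(p*m)
          + (p*m)^2*(m*n) + (p*m)^2*(n*p)))
        / (m * n * p * (m * n + n * p + p * m)) := by
    field_simp
    ring
  rw [key]
  apply div_nonneg _ (by positivity)
  have := schur_aux (m*n) (n*p) (p*m) (by positivity) (by positivity) (by positivity)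
  linarith
end

section
/- In any triangle with sides a, b, c, circumradius R, and inradius r, the chain a² + b² + c² ≥ ab + bc + ca ≥ a√(bc) + b√(ca) + c√(ab) ≥ 3·(a²b²c²)^(1/3) ≥ 18Rr holds. -/
private lemma amgm3 (x y z : ℝ) (hx : 0 ≤ x) (hy : 0 ≤ y) (hz : 0 ≤ z) :
    27 * (x * y * z) ≤ (x + y + z) ^ 3 := by
  nlinarith [mul_nonneg hz (sq_nonneg (x - y)), mul_nonneg hx (sq_nonneg (y - z)),
    mul_nonneg hy (sq_nonneg (x - z)), mul_nonneg (mul_nonneg hx hy) hz,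
    sq_nonneg (x - y), sq_nonneg (y - z), sq_nonneg (x - z)]

theorem chain_18Rr (a b c : ℝ) (ha : 0 < a) (hb : 0 < b) (hc : 0 < c)
    (hA : a < b + c) (hB : b < c + a) (hC : c < a + b) (s S : ℝ) (hs : s = (a + b + c) / 2)
    (hS : S = Real.sqrt (s * (s - a) * (s - b) * (s - c))) (R : ℝ) (hR : R = a * b * c / (4 * S)) (r : ℝ) (hr : r = S / s) :
    a ^ 2 + b ^ 2 + c ^ 2 ≥ a * b + b * c + c * a ∧
    a * b + b * c + c * a ≥
      a * Real.sqrt (b * c) + b * Real.sqrt (c * a) + c * Real.sqrt (a * b) ∧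
    a * Real.sqrt (b * c) + b * Real.sqrt (c * a) + c * Real.sqrt (a * b) ≥
      3 * (a ^ 2 * b ^ 2 * c ^ 2) ^ ((1 : ℝ) / 3) ∧
    3 * (a ^ 2 * b ^ 2 * c ^ 2) ^ ((1 : ℝ) / 3) ≥ 18 * R * r := by
  have habc : (0:ℝ) < a * b * c := by positivity
  set u := Real.sqrt (a * b) with hu_def
  set v := Real.sqrt (b * c) with hv_def
  set w := Real.sqrt (c * a) with hw_def
  have hu : u ^ 2 = a * b := Real.sq_sqrt (by positivity)
  have hv : v ^ 2 = b * c := Real.sq_sqrt (by positivity)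
  have hw : w ^ 2 = c * a := Real.sq_sqrt (by positivity)
  have hu0 : 0 ≤ u := Real.sqrt_nonneg _
  have hv0 : 0 ≤ v := Real.sqrt_nonneg _
  have hw0 : 0 ≤ w := Real.sqrt_nonneg _
  have h1 : a * v = u * w := by
    rw [hu_def, hv_def, hw_def, ← Real.sqrt_mul (by positivity : (0:ℝ) ≤ a * b),
      show a * b * (c * a) = a ^ 2 * (b * c) by ring,
      Real.sqrt_mul (sq_nonneg a), Real.sqrt_sq ha.le]
  have h2 : b * w = u * v := by
    rw [hu_def, hv_def, hw_def, ← Real.sqrt_mul (by positivity : (0:ℝ) ≤ a * b),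
      show a * b * (b * c) = b ^ 2 * (c * a) by ring,
      Real.sqrt_mul (sq_nonneg b), Real.sqrt_sq hb.le]
  have h3 : c * u = v * w := by
    rw [hu_def, hv_def, hw_def, ← Real.sqrt_mul (by positivity : (0:ℝ) ≤ b * c),
      show b * c * (c * a) = c ^ 2 * (a * b) by ring,
      Real.sqrt_mul (sq_nonneg c), Real.sqrt_sq hc.le]
  have huvw : u * v * w = a * b * c := by
    rw [hu_def, hv_def, hw_def, ← Real.sqrt_mul (by positivity : (0:ℝ) ≤ a * b),
      ← Real.sqrt_mul (by positivity : (0:ℝ) ≤ a * b * (b * c)),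
      show a * b * (b * c) * (c * a) = (a * b * c) ^ 2 by ring,
      Real.sqrt_sq habc.le]
  obtain ⟨t, ht_pos, ht3, heq⟩ : ∃ t : ℝ, 0 < t ∧ t ^ 3 = a * b * c ∧
      (a ^ 2 * b ^ 2 * c ^ 2) ^ ((1:ℝ)/3) = t ^ 2 := by
    refine ⟨(a * b * c) ^ ((1:ℝ)/3), Real.rpow_pos_of_pos habc _, ?_, ?_⟩
    · rw [← Real.rpow_natCast ((a*b*c) ^ ((1:ℝ)/3)) 3, ← Real.rpow_mul habc.le]
      norm_num
    · rw [show a ^ 2 * b ^ 2 * c ^ 2 = (a * b * c) ^ 2 by ring,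
        ← Real.rpow_natCast (a * b * c) 2, ← Real.rpow_mul habc.le,
        show ((2:ℕ):ℝ) * (1/3) = (1/3) * ((2:ℕ):ℝ) by ring,
        Real.rpow_mul habc.le, Real.rpow_natCast]
  refine ⟨by nlinarith [sq_nonneg (a-b), sq_nonneg (b-c), sq_nonneg (a-c)], ?_, ?_, ?_⟩
  · rw [h1, h2, h3]
    nlinarith [sq_nonneg (u-v), sq_nonneg (v-w), sq_nonneg (u-w)]
  · rw [heq, h1, h2, h3]
    have hx : u * w + u * v + v * w ≥ 3 * t ^ 2 := by
      have hcube : (3 * t ^ 2) ^ 3 ≤ (u * w + u * v + v * w) ^ 3 := by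
        have hge := amgm3 (u*w) (u*v) (v*w) (by positivity) (by positivity) (by positivity)
        have hp : (u*w) * (u*v) * (v*w) = (t ^ 3) ^ 2 := by
          rw [ht3, ← huvw]; ring
        calc (3 * t ^ 2) ^ 3 = 27 * ((u*w) * (u*v) * (v*w)) := by rw [hp]; ring
        _ ≤ (u * w + u * v + v * w) ^ 3 := hge
      exact le_of_pow_le_pow_left₀ (by norm_num) (by positivity) hcube
    linarith
  · have hSpos : 0 < S := by
      rw [hS]
      apply Real.sqrt_pos.mpr
      have h1 : 0 < s := by rw [hs]; linarith
      have h2 : 0 < s - a := by rw [hs]; linarith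
      have h3 : 0 < s - b := by rw [hs]; linarith
      have h4 : 0 < s - c := by rw [hs]; linarith
      positivity
    have hspos : 0 < s := by rw [hs]; linarith
    have hRr : 18 * R * r = 9 * (a * b * c) / (a + b + c) := by
      rw [hR, hr, hs]
      field_simp
      ring
    rw [heq, hRr]
    have h3t : 3 * t ≤ a + b + c := by
      have hcube : (3 * t) ^ 3 ≤ (a + b + c) ^ 3 := by
        have hge := amgm3 a b c ha.le hb.le hc.le
        calc (3 * t) ^ 3 = 27 * (a * b * c) := by rw [← ht3]; ring
        _ ≤ (a + b + c) ^ 3 := hge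
      exact le_of_pow_le_pow_left₀ (by norm_num) (by positivity) hcube
    rw [ge_iff_le, div_le_iff₀ (by linarith : (0:ℝ) < a + b + c)]
    have hmul : 3 * t ^ 2 * (3 * t) ≤ 3 * t ^ 2 * (a + b + c) :=
      mul_le_mul_of_nonneg_left h3t (by positivity)
    calc 9 * (a * b * c) = 3 * t ^ 2 * (3 * t) := by rw [← ht3]; ring
    _ ≤ 3 * t ^ 2 * (a + b + c) := hmul
end

section
/- In any triangle with sides a, b, c, circumradius R, and inradius r, a² + b² + c² ≤ 18Rr + (a−b)² + (b−c)² + (c−a)². -/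
/-!
The area cancels in the product of the radii: `R * r = a b c / (4 S) * S / s = a b c / (2 (a + b + c))`.
So the claim reads `(a + b + c) (2 (ab + bc + ca) - (a² + b² + c²)) ≤ 9 a b c`, which expands to
Schur's inequality `a (a - b) (a - c) + b (b - a) (b - c) + c (c - a) (c - b) ≥ 0`.
-/

theorem schur_inequality {a b c : ℝ} (ha : 0 ≤ a) (hb : 0 ≤ b) (hc : 0 ≤ c) :
    0 ≤ a * (a - b) * (a - c) + b * (b - a) * (b - c) + c * (c - a) * (c - b) := by
  nlinarith [mul_nonneg (mul_nonneg ha hb) hc, mul_nonneg ha (sq_nonneg (a - b)),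
    mul_nonneg ha (sq_nonneg (a - c)), mul_nonneg hb (sq_nonneg (b - c)),
    mul_nonneg hb (sq_nonneg (b - a)), mul_nonneg hc (sq_nonneg (c - a)),
    mul_nonneg hc (sq_nonneg (c - b))]

theorem sq_add_sq_add_sq_le_nine_mul_div_add {a b c : ℝ} (ha : 0 ≤ a) (hb : 0 ≤ b) (hc : 0 ≤ c)
    (habc : 0 < a + b + c) :
    a ^ 2 + b ^ 2 + c ^ 2 ≤
      9 * a * b * c / (a + b + c) + (a - b) ^ 2 + (b - c) ^ 2 + (c - a) ^ 2 := by
  have hschur :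
      2 * (a * b + b * c + c * a) - (a ^ 2 + b ^ 2 + c ^ 2) ≤ 9 * a * b * c / (a + b + c) := by
    rw [le_div_iff₀ habc]
    linarith [schur_inequality ha hb hc]
  linarith

theorem heron_product_pos {a b c s : ℝ} (hA : a < b + c) (hB : b < c + a) (hC : c < a + b)
    (hs : s = (a + b + c) / 2) : 0 < s * (s - a) * (s - b) * (s - c) := by
  have : 0 < s := by linarith
  have : 0 < s - a := by linarith
  have : 0 < s - b := by linarith
  have : 0 < s - c := by linarith
  positivity

theorem reverse_18Rr_general (a b c : ℝ)
    (hA : a < b + c) (hB : b < c + a) (hC : c < a + b) (s S : ℝ) (hs : s = (a + b + c) / 2)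
    (hS : S = Real.sqrt (s * (s - a) * (s - b) * (s - c))) (R : ℝ) (hR : R = a * b * c / (4 * S)) (r : ℝ) (hr : r = S / s) :
    a ^ 2 + b ^ 2 + c ^ 2 ≤ 18 * R * r
      + (a - b) ^ 2 + (b - c) ^ 2 + (c - a) ^ 2 := by
  have hS0 : S ≠ 0 := by
    rw [hS]
    exact (Real.sqrt_pos.2 (heron_product_pos hA hB hC hs)).ne'
  have habc : 0 < a + b + c := by linarith
  have hRr : 18 * R * r = 9 * a * b * c / (a + b + c) := by
    rw [hR, hr, hs]
    field_simp
    ring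
  rw [hRr]
  exact sq_add_sq_add_sq_le_nine_mul_div_add (by linarith) (by linarith) (by linarith) habc

theorem reverse_18Rr (a b c : ℝ) (ha : 0 < a) (hb : 0 < b) (hc : 0 < c)
    (hA : a < b + c) (hB : b < c + a) (hC : c < a + b) (s S : ℝ) (hs : s = (a + b + c) / 2)
    (hS : S = Real.sqrt (s * (s - a) * (s - b) * (s - c))) (R : ℝ) (hR : R = a * b * c / (4 * S)) (r : ℝ) (hr : r = S / s) :
    a ^ 2 + b ^ 2 + c ^ 2 ≤ 18 * R * r
      + (a - b) ^ 2 + (b - c) ^ 2 + (c - a) ^ 2 :=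
  reverse_18Rr_general a b c hA hB hC s S hs hS R hR r hr
end

section
/- In any triangle with sides a, b, c, area S, circumradius R, and inradius r, a² + b² + c² ≥ 2√3·S + 2r(4R + r) + (a−b)² + (b−c)² + (c−a)². -/
/-!
Put `x = s - a`, `y = s - b`, `z = s - c` and `Q = x y + y z + z x`. Then
`a² + b² + c² - ((a - b)² + (b - c)² + (c - a)²) = 4 Q`, and Heron's formula turns the classical
identity `r (4 R + r) = Q` into polynomial algebra. The inequality thus reduces to `√3 S ≤ Q`,
i.e. `3 (x + y + z) x y z ≤ Q²`, which is `(u + v + w)² ≥ 3 (u v + v w + w u)` for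
`u = x y`, `v = y z`, `w = z x`.
-/

open Real

theorem three_mul_sum_mul_prod_le_sq (x y z : ℝ) :
    3 * ((x + y + z) * x * y * z) ≤ (x * y + y * z + z * x) ^ 2 := by
  nlinarith [sq_nonneg (x * y - y * z), sq_nonneg (y * z - z * x), sq_nonneg (z * x - x * y)]

theorem sqrt_three_mul_sqrt_heron_le {s a b c : ℝ} (hs : s = (a + b + c) / 2)
    (ha : 0 ≤ s - a) (hb : 0 ≤ s - b) (hc : 0 ≤ s - c) :
    √3 * √(s * (s - a) * (s - b) * (s - c))
      ≤ (s - a) * (s - b) + (s - b) * (s - c) + (s - c) * (s - a) := by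
  have hsum : s = (s - a) + (s - b) + (s - c) := by rw [hs]; ring
  rw [← sqrt_mul zero_le_three, ← sqrt_sq (by positivity : 0 ≤ (s - a) * (s - b) + _ + _)]
  apply sqrt_le_sqrt
  rw [hsum]
  simpa only [← hsum] using three_mul_sum_mul_prod_le_sq (s - a) (s - b) (s - c)

theorem sq_add_sq_add_sq_sub_sq_sub_eq {s a b c : ℝ} (hs : s = (a + b + c) / 2) :
    a ^ 2 + b ^ 2 + c ^ 2 - ((a - b) ^ 2 + (b - c) ^ 2 + (c - a) ^ 2)
      = 4 * ((s - a) * (s - b) + (s - b) * (s - c) + (s - c) * (s - a)) := by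
  subst hs; ring

theorem inradius_mul_four_circumradius_add_inradius {s a b c S : ℝ} (hs : s = (a + b + c) / 2)
    (hs0 : s ≠ 0) (hS0 : S ≠ 0) (hS : S ^ 2 = s * (s - a) * (s - b) * (s - c)) :
    S / s * (4 * (a * b * c / (4 * S)) + S / s)
      = (s - a) * (s - b) + (s - b) * (s - c) + (s - c) * (s - a) := by
  field_simp
  rw [hS]
  subst hs
  ring

theorem refinement_one_general (a b c : ℝ)
    (hA : a < b + c) (hB : b < c + a) (hC : c < a + b) (s S : ℝ) (hs : s = (a + b + c) / 2)
    (hS : S = Real.sqrt (s * (s - a) * (s - b) * (s - c))) (R : ℝ) (hR : R = a * b * c / (4 * S)) (r : ℝ) (hr : r = S / s) :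
    a ^ 2 + b ^ 2 + c ^ 2 ≥ 2 * Real.sqrt 3 * S + 2 * r * (4 * R + r)
      + (a - b) ^ 2 + (b - c) ^ 2 + (c - a) ^ 2 := by
  have ha : 0 < s - a := by rw [hs]; linarith
  have hb : 0 < s - b := by rw [hs]; linarith
  have hc : 0 < s - c := by rw [hs]; linarith
  have hs0 : 0 < s := by rw [hs]; linarith
  have hheron : 0 < s * (s - a) * (s - b) * (s - c) := by positivity
  have hS0 : 0 < S := hS ▸ sqrt_pos.mpr hheron
  have hS2 : S ^ 2 = s * (s - a) * (s - b) * (s - c) := hS ▸ sq_sqrt hheron.le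
  have hrR : 2 * r * (4 * R + r)
      = 2 * ((s - a) * (s - b) + (s - b) * (s - c) + (s - c) * (s - a)) := by
    rw [hr, hR, mul_assoc, inradius_mul_four_circumradius_add_inradius hs hs0.ne' hS0.ne' hS2]
  have hsqrt := sqrt_three_mul_sqrt_heron_le hs ha.le hb.le hc.le
  have hsq := sq_add_sq_add_sq_sub_sq_sub_eq hs
  rw [← hS] at hsqrt
  linarith

theorem refinement_one (a b c : ℝ) (ha : 0 < a) (hb : 0 < b) (hc : 0 < c)
    (hA : a < b + c) (hB : b < c + a) (hC : c < a + b) (s S : ℝ) (hs : s = (a + b + c) / 2)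
    (hS : S = Real.sqrt (s * (s - a) * (s - b) * (s - c))) (R : ℝ) (hR : R = a * b * c / (4 * S)) (r : ℝ) (hr : r = S / s) :
    a ^ 2 + b ^ 2 + c ^ 2 ≥ 2 * Real.sqrt 3 * S + 2 * r * (4 * R + r)
      + (a - b) ^ 2 + (b - c) ^ 2 + (c - a) ^ 2 :=
  refinement_one_general a b c hA hB hC s S hs hS R hR r hr
end

section
/- In any triangle with sides a, b, c, area S, circumradius R, and inradius r, a² + b² + c² ≥ 4S·√(3 + 4(R − 2r)/(4R + r)) + (a−b)² + (b−c)² + (c−a)² (sharpened Finsler–Hadwiger inequality). -/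
/-!
Substituting `a = y + z`, `b = z + x`, `c = x + y` (so `s - a = x`, …), the difference
`a² + b² + c² - (a - b)² - (b - c)² - (c - a)²` equals `4 q` with `q = xy + yz + zx`, while
`S² = p·xyz`, `r = S / p` and `R = (p q - xyz) / (4 S)` with `p = x + y + z`. The factor under the
root becomes `(4 p q - 9 xyz) / (p q)`, so the claim `S² · (4 p q - 9 xyz) / (p q) ≤ q²` is
Schur's inequality `(u + v + w)³ + 9 uvw ≥ 4 (u + v + w)(uv + vw + wu)` for `u, v, w = xy, yz, zx`.
-/

open Real

theorem schur_cubic {u v w : ℝ} (hu : 0 ≤ u) (hv : 0 ≤ v) (hw : 0 ≤ w) :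
    4 * (u + v + w) * (u * v + v * w + w * u) ≤ (u + v + w) ^ 3 + 9 * (u * v * w) := by
  rcases le_total u v with h1 | h1 <;> rcases le_total v w with h2 | h2 <;>
    rcases le_total u w with h3 | h3 <;>
    nlinarith [mul_nonneg hu hv, mul_nonneg hv hw, mul_nonneg hu hw,
      sq_nonneg (u - v), sq_nonneg (v - w), sq_nonneg (u - w),
      mul_nonneg (mul_nonneg hu hv) hw]

theorem schur_cubic_pairwise_products {x y z : ℝ} (hx : 0 ≤ x) (hy : 0 ≤ y) (hz : 0 ≤ z) :
    (4 * (x + y + z) * (x * y + y * z + z * x) - 9 * (x * y * z)) * (x * y * z) ≤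
      (x * y + y * z + z * x) ^ 3 := by
  linear_combination schur_cubic (mul_nonneg hx hy) (mul_nonneg hy hz) (mul_nonneg hz hx)

theorem exists_ravi_substitution {a b c : ℝ} (hA : a < b + c) (hB : b < c + a) (hC : c < a + b) :
    ∃ x y z : ℝ, 0 < x ∧ 0 < y ∧ 0 < z ∧ a = y + z ∧ b = z + x ∧ c = x + y :=
  ⟨(b + c - a) / 2, (c + a - b) / 2, (a + b - c) / 2, by linarith, by linarith, by linarith,
    by ring, by ring, by ring⟩

theorem area_mul_sqrt_le_of_ravi {x y z S R r : ℝ} (hx : 0 < x) (hy : 0 < y) (hz : 0 < z)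
    (hS : S = √((x + y + z) * x * y * z)) (hR : R = (y + z) * (z + x) * (x + y) / (4 * S))
    (hr : r = S / (x + y + z)) :
    S * √(3 + 4 * (R - 2 * r) / (4 * R + r)) ≤ x * y + y * z + z * x := by
  have hSpos : 0 < S := hS ▸ sqrt_pos.mpr (by positivity)
  have hS2 : S ^ 2 = (x + y + z) * (x * y * z) := by rw [hS, sq_sqrt (by positivity)]; ring
  have hfactor : 3 + 4 * (R - 2 * r) / (4 * R + r) =
      (4 * (x + y + z) * (x * y + y * z + z * x) - 9 * (x * y * z)) /
        ((x + y + z) * (x * y + y * z + z * x)) := by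
    have hr' : r = x * y * z / S := by
      rw [hr, div_eq_div_iff (by positivity) hSpos.ne']; linear_combination hS2
    rw [hR, hr']
    field_simp
    ring
  calc S * √(3 + 4 * (R - 2 * r) / (4 * R + r))
      = √(S ^ 2 * (3 + 4 * (R - 2 * r) / (4 * R + r))) := by
        rw [sqrt_mul (sq_nonneg S), sqrt_sq hSpos.le]
    _ ≤ x * y + y * z + z * x := by
        rw [sqrt_le_left (by positivity), hfactor, hS2, mul_div_assoc', div_le_iff₀ (by positivity)]
        linear_combination (x + y + z) * schur_cubic_pairwise_products hx.le hy.le hz.le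

theorem refinement_two_general (a b c : ℝ)
    (hA : a < b + c) (hB : b < c + a) (hC : c < a + b) (s S : ℝ) (hs : s = (a + b + c) / 2)
    (hS : S = Real.sqrt (s * (s - a) * (s - b) * (s - c))) (R : ℝ) (hR : R = a * b * c / (4 * S)) (r : ℝ) (hr : r = S / s) :
    a ^ 2 + b ^ 2 + c ^ 2 ≥
      4 * S * Real.sqrt (3 + 4 * (R - 2 * r) / (4 * R + r))
      + (a - b) ^ 2 + (b - c) ^ 2 + (c - a) ^ 2 := by
  obtain ⟨x, y, z, hx, hy, hz, rfl, rfl, rfl⟩ := exists_ravi_substitution hA hB hC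
  have hs' : s = x + y + z := by rw [hs]; ring
  have hS' : S = √((x + y + z) * x * y * z) := by rw [hS, hs']; congr 1; ring
  linear_combination 4 * area_mul_sqrt_le_of_ravi hx hy hz hS' hR (hs' ▸ hr)

theorem refinement_two (a b c : ℝ) (ha : 0 < a) (hb : 0 < b) (hc : 0 < c)
    (hA : a < b + c) (hB : b < c + a) (hC : c < a + b) (s S : ℝ) (hs : s = (a + b + c) / 2)
    (hS : S = Real.sqrt (s * (s - a) * (s - b) * (s - c))) (R : ℝ) (hR : R = a * b * c / (4 * S)) (r : ℝ) (hr : r = S / s) :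
    a ^ 2 + b ^ 2 + c ^ 2 ≥
      4 * S * Real.sqrt (3 + 4 * (R - 2 * r) / (4 * R + r))
      + (a - b) ^ 2 + (b - c) ^ 2 + (c - a) ^ 2 :=
  refinement_two_general a b c hA hB hC s S hs hS R hR r hr
end

section
/- In any triangle with circumradius R, inradius r, and semiperimeter s, ((4R + r)/s)² + 9r/(4R + r) ≥ 4. -/
/-!
With the Ravi substitution `x = s - a`, `y = s - b`, `z = s - c`, put `p = xyz` and
`q = xy + yz + zx`. Heron's formula reads `S² = s p`, and `abc = s q - p` gives
`4R + r = s q / S`. The inequality then becomes `q³ + 9 p² ≥ 4 s p q`, which is Schur's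
inequality of degree one for the three numbers `xy`, `yz`, `zx`.
-/

theorem schur_inequality_s13 {u v w : ℝ} (hu : 0 ≤ u) (hv : 0 ≤ v) (hw : 0 ≤ w) :
    0 ≤ u * (u - v) * (u - w) + v * (v - u) * (v - w) + w * (w - u) * (w - v) := by
  rcases le_total u v with h1 | h1 <;> rcases le_total v w with h2 | h2 <;>
    rcases le_total u w with h3 | h3 <;>
    nlinarith [mul_nonneg (mul_nonneg hu hv) hw, mul_nonneg hu (sq_nonneg (v - w)),
      mul_nonneg hv (sq_nonneg (u - w)), mul_nonneg hw (sq_nonneg (u - v))]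

theorem schur_inequality_pairwise_products {x y z : ℝ} (hx : 0 ≤ x) (hy : 0 ≤ y) (hz : 0 ≤ z) :
    4 * (x + y + z) * (x * y * z) * (x * y + y * z + z * x) ≤
      (x * y + y * z + z * x) ^ 3 + 9 * (x * y * z) ^ 2 := by
  have := schur_inequality_s13 (mul_nonneg hx hy) (mul_nonneg hy hz) (mul_nonneg hz hx)
  linear_combination this

theorem four_mul_circumradius_add_inradius_of_ravi {x y z S : ℝ} (hs : x + y + z ≠ 0)
    (hS : S ≠ 0) (heron : S ^ 2 = (x + y + z) * (x * y * z)) :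
    4 * ((y + z) * (z + x) * (x + y) / (4 * S)) + S / (x + y + z) =
      (x + y + z) * (x * y + y * z + z * x) / S := by
  field_simp
  linear_combination heron

theorem sq_div_add_nine_div_eq {s p q S : ℝ} (hs : s ≠ 0) (hp : p ≠ 0) (hq : q ≠ 0) (hS : S ≠ 0)
    (heron : S ^ 2 = s * p) :
    (s * q / S / s) ^ 2 + 9 * (S / s) / (s * q / S) = (q ^ 3 + 9 * p ^ 2) / (s * p * q) := by
  field_simp
  linear_combination (9 * S ^ 2 * p - s * q ^ 3) * heron

theorem key_ineq_general (a b c : ℝ)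
    (hA : a < b + c) (hB : b < c + a) (hC : c < a + b) (s S : ℝ) (hs : s = (a + b + c) / 2)
    (hS : S = Real.sqrt (s * (s - a) * (s - b) * (s - c))) (R : ℝ) (hR : R = a * b * c / (4 * S)) (r : ℝ) (hr : r = S / s) :
    ((4 * R + r) / s) ^ 2 + 9 * r / (4 * R + r) ≥ 4 := by
  obtain ⟨x, y, z, rfl, rfl, rfl, rfl⟩ :
      ∃ x y z, a = y + z ∧ b = z + x ∧ c = x + y ∧ s = x + y + z :=
    ⟨s - a, s - b, s - c, by rw [hs]; ring, by rw [hs]; ring, by rw [hs]; ring, by rw [hs]; ring⟩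
  have hx : 0 < x := by linarith
  have hy : 0 < y := by linarith
  have hz : 0 < z := by linarith
  have heron : S ^ 2 = (x + y + z) * (x * y * z) := by
    rw [hS, Real.sq_sqrt (by ring_nf; positivity)]
    ring
  have hS0 : 0 < S := by rw [hS]; exact Real.sqrt_pos.mpr (by ring_nf; positivity)
  rw [hR, hr, four_mul_circumradius_add_inradius_of_ravi (by positivity) hS0.ne' heron,
    sq_div_add_nine_div_eq (by positivity) (by positivity) (by positivity) hS0.ne' heron,
    ge_iff_le, le_div_iff₀ (by positivity)]
  linarith [schur_inequality_pairwise_products hx.le hy.le hz.le]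

theorem key_ineq (a b c : ℝ) (ha : 0 < a) (hb : 0 < b) (hc : 0 < c)
    (hA : a < b + c) (hB : b < c + a) (hC : c < a + b) (s S : ℝ) (hs : s = (a + b + c) / 2)
    (hS : S = Real.sqrt (s * (s - a) * (s - b) * (s - c))) (R : ℝ) (hR : R = a * b * c / (4 * S)) (r : ℝ) (hr : r = S / s) :
    ((4 * R + r) / s) ^ 2 + 9 * r / (4 * R + r) ≥ 4 :=
  key_ineq_general a b c hA hB hC s S hs hS R hR r hr
end

section
/- In any triangle with sides a, b, c, semiperimeter s, area S, circumradius R, and inradius r, the sum (s−a)(s−b)/c + (s−b)(s−c)/a + (s−c)(s−a)/b is at least (S/(4R))·(5 − 9r/(4R + r)). -/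
theorem keyOrd (x y z : ℝ) (hx : 0 < x) (hy : 0 < y) (hz : 0 < z)
    (h1 : z ≤ y) (h2 : y ≤ x) :
    (x+y+z)*(x*y*z)*(5*((x+y)*(y+z)*(z+x)) - 4*(x*y*z))
      ≤ (x*y*(y+z)*(z+x)+y*z*(x+y)*(z+x)+z*x*(x+y)*(y+z))*((x+y)*(y+z)*(z+x)+x*y*z) := by
  have hSx : 0 ≤ x^2*(y+z) - x*y*z/2 := by
    nlinarith [mul_nonneg (mul_nonneg hx.le hz.le) (sub_nonneg.2 h2),
      mul_pos (mul_pos hx hx) hy, mul_pos (mul_pos hx hy) hz]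
  have hSy : 0 ≤ y^2*(x+z) - x*y*z/2 := by
    nlinarith [mul_nonneg (mul_nonneg hx.le hy.le) (sub_nonneg.2 h1),
      mul_pos (mul_pos hy hy) hz, mul_pos (mul_pos hx hy) hy]
  have hcube : (0:ℝ) ≤ y^3 - z^3 := by nlinarith [sq_nonneg y, sq_nonneg z, mul_pos hy hz]
  have hSz : 0 ≤ y^2*(y^2*(x+z) - x*y*z/2) + z^2*(z^2*(x+y) - x*y*z/2) := by
    nlinarith [mul_nonneg (mul_nonneg hx.le (sub_nonneg.2 h1)) hcube,
      mul_pos (mul_pos (mul_pos hy hy) (mul_pos hy hy)) hz,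
      mul_pos (mul_pos (mul_pos hz hz) (mul_pos hz hz)) hy]
  have t1 : 0 ≤ x^2*(y-z)^2*(x^2*(y+z) - x*y*z/2) := by positivity
  have hd : 0 ≤ (x-z)^2 - (x-y)^2 := by nlinarith
  have t2 : 0 ≤ y^2*(y^2*(x+z) - x*y*z/2)*((x-z)^2-(x-y)^2) :=
    mul_nonneg (mul_nonneg (sq_nonneg y) hSy) hd
  have t3 : 0 ≤ (x-y)^2 * (y^2*(y^2*(x+z)-x*y*z/2) + z^2*(z^2*(x+y)-x*y*z/2)) :=
    mul_nonneg (sq_nonneg _) hSz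
  nlinarith [t1, t2, t3]

theorem key (x y z : ℝ) (hx : 0 < x) (hy : 0 < y) (hz : 0 < z) :
    (x+y+z)*(x*y*z)*(5*((x+y)*(y+z)*(z+x)) - 4*(x*y*z))
      ≤ (x*y*(y+z)*(z+x)+y*z*(x+y)*(z+x)+z*x*(x+y)*(y+z))*((x+y)*(y+z)*(z+x)+x*y*z) := by
  rcases le_total x y with h1 | h1 <;> rcases le_total y z with h2 | h2 <;>
    rcases le_total x z with h3 | h3
  · nlinarith [keyOrd z y x hz hy hx h1 h2]
  · nlinarith [keyOrd z y x hz hy hx h1 h2]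
  · nlinarith [keyOrd y z x hy hz hx h3 h2]
  · nlinarith [keyOrd y x z hy hx hz h3 h1]
  · nlinarith [keyOrd z x y hz hx hy h1 h3]
  · nlinarith [keyOrd x z y hx hz hy h2 h3]
  · nlinarith [keyOrd x y z hx hy hz h2 h1]
  · nlinarith [keyOrd x y z hx hy hz h2 h1]

theorem final (x y z : ℝ) (hx : 0 < x) (hy : 0 < y) (hz : 0 < z)
    (S R r : ℝ)
    (hS : S = Real.sqrt ((x+y+z)*x*y*z))
    (hR : R = (y+z)*((z+x)*((x+y)))/(4*S))
    (hr : r = S/(x+y+z)) :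
    x*y/(x+y) + y*z/(y+z) + z*x/(z+x) ≥ S/(4*R)*(5 - 9*r/(4*R+r)) := by
  have hSpos : 0 < S := by rw [hS]; exact Real.sqrt_pos.2 (by positivity)
  have hS2 : S^2 = (x+y+z)*x*y*z := by rw [hS]; exact Real.sq_sqrt (by positivity)
  have hSne : S ≠ 0 := ne_of_gt hSpos
  have hsne : x+y+z ≠ 0 := by positivity
  have hQ : (0:ℝ) < (y+z)*(z+x)*(x+y) := by positivity
  have hQp : (0:ℝ) < (y+z)*(z+x)*(x+y) + x*y*z := by positivity
  have h1 : 4*R + r = ((y+z)*(z+x)*(x+y) + x*y*z)/S := by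
    rw [hR, hr]; field_simp; linear_combination hS2
  have e1 : S/(4*R) = S^2/((y+z)*(z+x)*(x+y)) := by
    rw [hR]; field_simp
  have e2 : 9*r/(4*R+r) = 9*(x*y*z)/((y+z)*(z+x)*(x+y)+x*y*z) := by
    rw [h1, hr]; field_simp; linear_combination hS2
  rw [e1, e2, hS2, ge_iff_le, ← sub_nonneg]
  have hid : x*y/(x+y) + y*z/(y+z) + z*x/(z+x)
      - (x+y+z)*x*y*z/((y+z)*(z+x)*(x+y))*(5 - 9*(x*y*z)/((y+z)*(z+x)*(x+y)+x*y*z))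
      = ((x*y*(y+z)*(z+x)+y*z*(x+y)*(z+x)+z*x*(x+y)*(y+z))*((x+y)*(y+z)*(z+x)+x*y*z)
         - (x+y+z)*(x*y*z)*(5*((x+y)*(y+z)*(z+x)) - 4*(x*y*z)))
        / ((y+z)*(z+x)*(x+y)*((y+z)*(z+x)*(x+y)+x*y*z)) := by
    field_simp
    ring
  rw [hid]
  exact div_nonneg (sub_nonneg.2 (key x y z hx hy hz)) (by positivity)

theorem application_two (a b c : ℝ) (ha : 0 < a) (hb : 0 < b) (hc : 0 < c)
    (hA : a < b + c) (hB : b < c + a) (hC : c < a + b) (s S : ℝ) (hs : s = (a + b + c) / 2)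
    (hS : S = Real.sqrt (s * (s - a) * (s - b) * (s - c))) (R : ℝ) (hR : R = a * b * c / (4 * S)) (r : ℝ) (hr : r = S / s) :
    (s - a) * (s - b) / c + (s - b) * (s - c) / a + (s - c) * (s - a) / b
      ≥ S / (4 * R) * (5 - 9 * r / (4 * R + r)) := by
  have hxp : 0 < s - a := by rw [hs]; linarith
  have hyp : 0 < s - b := by rw [hs]; linarith
  have hzp : 0 < s - c := by rw [hs]; linarith
  have hsum : s = (s - a) + (s - b) + (s - c) := by rw [hs]; ring
  have hS' : S = Real.sqrt (((s-a)+(s-b)+(s-c))*(s-a)*(s-b)*(s-c)) := by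
    rw [hS]; congr 1; linear_combination ((s-a)*(s-b)*(s-c)) * hsum
  have habc : a*b*c = ((s-b)+(s-c))*((((s-c)+(s-a)))*(((s-a)+(s-b)))) := by
    rw [hs]; ring
  have hR' : R = ((s-b)+(s-c))*((((s-c)+(s-a)))*(((s-a)+(s-b))))/(4*S) := by
    rw [hR, habc]
  have hr' : r = S/((s-a)+(s-b)+(s-c)) := by rw [hr, ← hsum]
  have hmul : ((s-a)+(s-b)+(s-c))*(s-a)*(s-b)*(s-c) = ((s-a)+(s-b)+(s-c))*(s-a)*((s-b))*((s-c)) := rfl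
  have h := final (s-a) (s-b) (s-c) hxp hyp hzp S R r hS' hR' hr'
  have e1 : (s-a)+(s-b) = c := by rw [hs]; ring
  have e2 : (s-b)+(s-c) = a := by rw [hs]; ring
  have e3 : (s-c)+(s-a) = b := by rw [hs]; ring
  rw [e1, e2, e3] at h
  exact h
end

section
/- In any triangle with sides a, b, c, circumradius R, and inradius r, a²/(b+c−a) + b²/(c+a−b) + c²/(a+b−c) ≥ 3R·√(4 − 9r/(4R + r)). -/
/-!
With `p = (s - a)(s - b)(s - c)`, Heron's formula gives `r²s = p` and `4Rrs = abc`, so the left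
side equals `2s(R - r)/r`. After squaring, the claim is a polynomial inequality in `R`, `r`, `s`
which is a nonnegative combination of Euler's inequality `R ≥ 2r` (AM-GM after the Ravi
substitution) and Gerretsen's inequality `s² ≥ 16Rr - 5r²` (Schur's inequality in `s - a`,
`s - b`, `s - c`).
-/

open Real

theorem schur_ineq {x y z : ℝ} (hx : 0 ≤ x) (hy : 0 ≤ y) (hz : 0 ≤ z) :
    0 ≤ x * (x - y) * (x - z) + y * (y - z) * (y - x) + z * (z - x) * (z - y) := by
  nlinarith [mul_nonneg hx (sq_nonneg (x - y)), mul_nonneg hy (sq_nonneg (y - z)),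
    mul_nonneg hz (sq_nonneg (z - x)), mul_nonneg hx (sq_nonneg (x - z)),
    mul_nonneg hy (sq_nonneg (x - y)), mul_nonneg hz (sq_nonneg (y - z))]

theorem euler_triangle_ineq {a b c s : ℝ} (hA : a < b + c) (hB : b < c + a) (hC : c < a + b)
    (hs : s = (a + b + c) / 2) :
    8 * ((s - a) * (s - b) * (s - c)) ≤ a * b * c := by
  subst hs
  nlinarith [mul_nonneg (sub_pos.2 hA).le (sq_nonneg (b - c)),
    mul_nonneg (sub_pos.2 hB).le (sq_nonneg (c - a)), mul_nonneg (sub_pos.2 hC).le (sq_nonneg (a - b))]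

theorem gerretsen_triangle_ineq {a b c s : ℝ} (hA : a < b + c) (hB : b < c + a) (hC : c < a + b)
    (hs : s = (a + b + c) / 2) :
    4 * (a * b * c) ≤ s ^ 3 + 5 * ((s - a) * (s - b) * (s - c)) := by
  have := schur_ineq (x := s - a) (y := s - b) (z := s - c) (by linarith) (by linarith) (by linarith)
  subst hs
  linear_combination this

theorem sum_sq_div_eq {a b c s R r : ℝ} (hA : a < b + c) (hB : b < c + a) (hC : c < a + b)
    (hs : s = (a + b + c) / 2) (hr : r ≠ 0) (hr2 : r ^ 2 * s = (s - a) * (s - b) * (s - c))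
    (hRr : 4 * R * r * s = a * b * c) :
    a ^ 2 / (b + c - a) + b ^ 2 / (c + a - b) + c ^ 2 / (a + b - c) = 2 * s * (R - r) / r := by
  have ha : b + c - a ≠ 0 := by linarith
  have hb : c + a - b ≠ 0 := by linarith
  have hc : a + b - c ≠ 0 := by linarith
  rw [div_add_div _ _ ha hb, div_add_div _ _ (mul_ne_zero ha hb) hc,
    div_eq_div_iff (mul_ne_zero (mul_ne_zero ha hb) hc) hr]
  subst hs
  linear_combination (-4 * ((a + b + c) / 2) * r) * hRr + (16 * ((a + b + c) / 2) * R) * hr2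

theorem sq_bound_of_euler_gerretsen {R r s : ℝ} (hr : 0 < r) (hEuler : 2 * r ≤ R)
    (hGerretsen : 16 * R * r - 5 * r ^ 2 ≤ s ^ 2) :
    (16 * R - 5 * r) * (3 * R * r) ^ 2 ≤ (2 * s * (R - r)) ^ 2 * (4 * R + r) := by
  have hq : 0 ≤ 16 * R ^ 2 - 5 * R * r - 2 * r ^ 2 := by nlinarith
  -- The difference of the two sides is the sum of these two nonnegative terms.
  have hG : 0 ≤ 4 * (R - r) ^ 2 * (4 * R + r) * (s ^ 2 + 5 * r ^ 2 - 16 * R * r) :=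
    mul_nonneg (mul_nonneg (by positivity) (by linarith)) (by linarith)
  have hE : 0 ≤ r * (16 * R - 5 * r) * ((R - 2 * r) * (16 * R ^ 2 - 5 * R * r - 2 * r ^ 2)) :=
    mul_nonneg (mul_nonneg hr.le (by linarith)) (mul_nonneg (by linarith) hq)
  linear_combination hG + hE

theorem three_mul_mul_sqrt_le {R r s : ℝ} (hr : 0 < r) (hs : 0 ≤ s) (hEuler : 2 * r ≤ R)
    (hGerretsen : 16 * R * r - 5 * r ^ 2 ≤ s ^ 2) :
    3 * R * √(4 - 9 * r / (4 * R + r)) ≤ 2 * s * (R - r) / r := by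
  have hR : 0 < 4 * R + r := by linarith
  have hE : 4 - 9 * r / (4 * R + r) = (16 * R - 5 * r) / (4 * R + r) := by
    field_simp
    ring
  have hM : 0 ≤ 2 * s * (R - r) / r := div_nonneg (mul_nonneg (by positivity) (by linarith)) hr.le
  rw [hE, ← sqrt_sq (by linarith : 0 ≤ 3 * R), ← sqrt_mul (sq_nonneg _), sqrt_le_left hM,
    mul_div_assoc', div_pow, div_le_div_iff₀ hR (by positivity)]
  linear_combination sq_bound_of_euler_gerretsen hr hEuler hGerretsen

theorem application_four_general (a b c : ℝ)
    (hA : a < b + c) (hB : b < c + a) (hC : c < a + b) (s S : ℝ) (hs : s = (a + b + c) / 2)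
    (hS : S = Real.sqrt (s * (s - a) * (s - b) * (s - c))) (R : ℝ) (hR : R = a * b * c / (4 * S)) (r : ℝ) (hr : r = S / s) :
    a ^ 2 / (b + c - a) + b ^ 2 / (c + a - b) + c ^ 2 / (a + b - c)
      ≥ 3 * R * Real.sqrt (4 - 9 * r / (4 * R + r)) := by
  have hx : 0 < s - a := by linarith
  have hy : 0 < s - b := by linarith
  have hz : 0 < s - c := by linarith
  have hs0 : 0 < s := by linarith
  have hS0 : 0 < S := hS ▸ sqrt_pos.2 (by positivity)
  have hr0 : 0 < r := hr ▸ div_pos hS0 hs0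
  have hr2 : r ^ 2 * s = (s - a) * (s - b) * (s - c) := by
    rw [hr, div_pow, hS, sq_sqrt (by positivity)]
    field_simp
  have hRr : 4 * R * r * s = a * b * c := by
    rw [hR, hr]
    field_simp
  have hEuler : 2 * r ≤ R := by
    refine le_of_mul_le_mul_right ?_ (by positivity : 0 < 4 * r * s)
    linear_combination euler_triangle_ineq hA hB hC hs + 8 * hr2 - hRr
  have hGerretsen : 16 * R * r - 5 * r ^ 2 ≤ s ^ 2 := by
    refine le_of_mul_le_mul_right ?_ hs0
    linear_combination gerretsen_triangle_ineq hA hB hC hs + 4 * hRr - 5 * hr2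
  rw [ge_iff_le, sum_sq_div_eq hA hB hC hs hr0.ne' hr2 hRr]
  exact three_mul_mul_sqrt_le hr0 hs0.le hEuler hGerretsen

theorem application_four (a b c : ℝ) (ha : 0 < a) (hb : 0 < b) (hc : 0 < c)
    (hA : a < b + c) (hB : b < c + a) (hC : c < a + b) (s S : ℝ) (hs : s = (a + b + c) / 2)
    (hS : S = Real.sqrt (s * (s - a) * (s - b) * (s - c))) (R : ℝ) (hR : R = a * b * c / (4 * S)) (r : ℝ) (hr : r = S / s) :
    a ^ 2 / (b + c - a) + b ^ 2 / (c + a - b) + c ^ 2 / (a + b - c)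
      ≥ 3 * R * Real.sqrt (4 - 9 * r / (4 * R + r)) :=
  application_four_general a b c hA hB hC s S hs hS R hR r hr
end

section
/- In any triangle ABC with angles A, B, C, circumradius R, and inradius r, tan(A/2) + tan(B/2) + tan(C/2) ≥ √(3 + 4(R − 2r)/(4R + r)). -/
/-!
Write `x, y, z` for the tangents of the half angles. Since the half angles add up to `π / 2`,
the cosine and sine addition formulas for three angles give `xy + yz + zx = 1` and
`sin (A/2) sin (B/2) sin (C/2) = xyz / (x + y + z - xyz)`, so `r / R` is a function of
`s = x + y + z` and `p = xyz`, and the radicand simplifies to `4 - 9p / s`.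
The inequality `s ^ 2 ≥ 4 - 9p / s` is then Schur's inequality
`s ^ 3 + 9p ≥ 4s (xy + yz + zx)`.
-/

open Real

theorem schur_inequality_s19 {x y z : ℝ} (hx : 0 ≤ x) (hy : 0 ≤ y) (hz : 0 ≤ z) :
    4 * (x + y + z) * (x * y + y * z + z * x) ≤ (x + y + z) ^ 3 + 9 * (x * y * z) := by
  rcases le_total x y with h1 | h1 <;> rcases le_total y z with h2 | h2 <;>
    rcases le_total x z with h3 | h3 <;>
  nlinarith [mul_nonneg (mul_nonneg hx hy) hz,
    mul_nonneg hx (sq_nonneg (y - z)), mul_nonneg hy (sq_nonneg (x - z)),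
    mul_nonneg hz (sq_nonneg (x - y))]

theorem sin_add_add (α β γ : ℝ) :
    sin (α + β + γ) = sin α * cos β * cos γ + cos α * sin β * cos γ + cos α * cos β * sin γ
      - sin α * sin β * sin γ := by
  simp only [sin_add, cos_add]
  ring

theorem cos_add_add (α β γ : ℝ) :
    cos (α + β + γ) = cos α * cos β * cos γ - sin α * sin β * cos γ - sin α * cos β * sin γ
      - cos α * sin β * sin γ := by
  simp only [sin_add, cos_add]
  ring

section HalfAngles

variable {α β γ : ℝ} (h : α + β + γ = π / 2) (hα : cos α ≠ 0) (hβ : cos β ≠ 0) (hγ : cos γ ≠ 0)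
include h hα hβ hγ

theorem tan_mul_tan_add_tan_mul_tan_add_tan_mul_tan_eq_one_of_add_add_eq_pi_div_two :
    tan α * tan β + tan β * tan γ + tan γ * tan α = 1 := by
  have hcos := cos_add_add α β γ
  rw [h, cos_pi_div_two] at hcos
  simp only [tan_eq_sin_div_cos]
  field_simp
  linear_combination hcos

theorem sin_mul_sin_mul_sin_eq_of_add_add_eq_pi_div_two :
    sin α * sin β * sin γ
      = tan α * tan β * tan γ / (tan α + tan β + tan γ - tan α * tan β * tan γ) := by
  have hden : tan α + tan β + tan γ - tan α * tan β * tan γ = (cos α * cos β * cos γ)⁻¹ := by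
    have hsin := sin_add_add α β γ
    rw [h, sin_pi_div_two] at hsin
    simp only [tan_eq_sin_div_cos]
    field_simp
    linear_combination -hsin
  rw [hden, div_inv_eq_mul]
  simp only [tan_eq_sin_div_cos]
  field_simp

end HalfAngles

theorem three_add_div_eq_four_sub_div {x y z R r : ℝ} (hx : 0 < x) (hy : 0 < y) (hz : 0 < z)
    (hxyz : x * y + y * z + z * x = 1) (hR : R ≠ 0)
    (hr : r = 4 * R * (x * y * z / (x + y + z - x * y * z))) :
    3 + 4 * (R - 2 * r) / (4 * R + r) = 4 - 9 * (x * y * z) / (x + y + z) := by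
  have hden : x + y + z - x * y * z = (x + y) * (y + z) * (z + x) := by
    linear_combination -(x + y + z) * hxyz
  rw [hr, hden]
  field_simp
  rw [← hden]
  ring

theorem sqrt_three_add_div_le_add_add {x y z R r : ℝ} (hx : 0 < x) (hy : 0 < y) (hz : 0 < z)
    (hxyz : x * y + y * z + z * x = 1) (hR : R ≠ 0)
    (hr : r = 4 * R * (x * y * z / (x + y + z - x * y * z))) :
    √(3 + 4 * (R - 2 * r) / (4 * R + r)) ≤ x + y + z := by
  have hschur := schur_inequality_s19 hx.le hy.le hz.le
  rw [hxyz] at hschur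
  rw [three_add_div_eq_four_sub_div hx hy hz hxyz hR hr, sqrt_le_iff]
  have hs : 0 < x + y + z := by positivity
  refine ⟨hs.le, ?_⟩
  rw [sub_le_iff_le_add, add_div' _ _ _ hs.ne', le_div_iff₀ hs]
  linarith

theorem application_seven (A B C R r : ℝ) (hA : 0 < A) (hB : 0 < B) (hC : 0 < C)
    (hsum : A + B + C = Real.pi) (hR : 0 < R)
    (hr : r = 4 * R * Real.sin (A / 2) * Real.sin (B / 2) * Real.sin (C / 2)) :
    Real.tan (A / 2) + Real.tan (B / 2) + Real.tan (C / 2)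
      ≥ Real.sqrt (3 + 4 * (R - 2 * r) / (4 * R + r)) := by
  have hhalf : A / 2 + B / 2 + C / 2 = π / 2 := by linarith
  have hcos : ∀ θ, 0 < θ → θ < π → cos (θ / 2) ≠ 0 := fun θ h0 hπ =>
    (cos_pos_of_mem_Ioo ⟨by linarith, by linarith⟩).ne'
  have htan : ∀ θ, 0 < θ → θ < π → 0 < tan (θ / 2) := fun θ h0 hπ =>
    tan_pos_of_pos_of_lt_pi_div_two (by linarith) (by linarith)
  have hAπ : A < π := by linarith
  have hBπ : B < π := by linarith
  have hCπ : C < π := by linarith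
  refine sqrt_three_add_div_le_add_add (htan A hA hAπ) (htan B hB hBπ) (htan C hC hCπ)
    (tan_mul_tan_add_tan_mul_tan_add_tan_mul_tan_eq_one_of_add_add_eq_pi_div_two hhalf
      (hcos A hA hAπ) (hcos B hB hBπ) (hcos C hC hCπ)) hR.ne' ?_
  rw [hr, ← sin_mul_sin_mul_sin_eq_of_add_add_eq_pi_div_two hhalf
    (hcos A hA hAπ) (hcos B hB hBπ) (hcos C hC hCπ)]
  ring
end
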